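/- arXiv:2412.12008 — 5 statements merged into one kernel-verified Lean document; each statement's English description precedes it below -/
import Mathlib

section
/- The digital 2-sphere S² = [−1,1]³_ℤ \ {(0,0,0)} ⊆ ℤ³ with the 6-adjacency is a digital 2-manifold with boundary, where D₊² carries the 4-adjacency. Its boundary is ∂S² = {(x,y,z) : x, y, z ∈ {−1, 1}} (the eight corner points) and its interior is int(S²) = S² \ ∂S². Concretely: every corner point m (all coordinates ±1) has its induced digital neighborhood N₆(m) digitally isomorphic to the neighborhood of the point (1,0) taken within (D₊², 4-adjacency), while every non-corner point m has N₆(m) digitally isomorphic to the neighborhood N₄(s) of a point s taken in (ℤ², 4-adjacency); and S² with the 6-adjacency is not a digital 0-manifold or digital 1-manifold with boundary. -/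
/-- `κ_l`-adjacency on `ℤⁿ`: two distinct points are `κ_l`-adjacent if they differ
by at most `1` in every coordinate and differ in at most `l` coordinates. -/
def adjK (l n : ℕ) (x y : Fin n → ℤ) : Prop :=
  x ≠ y ∧ (∀ k, |x k - y k| ≤ 1) ∧
    (Finset.univ.filter fun k => x k ≠ y k).card ≤ l

/-- the 2-adjacency on `ℤ` -/
def adj2 (x y : ℤ) : Prop := |x - y| = 1

/-- the 4-adjacency on `ℤ²` -/
def adj4 (x y : ℤ × ℤ) : Prop := |x.1 - y.1| + |x.2 - y.2| = 1

/-- the 8-adjacency on `ℤ²` -/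
def adj8 (x y : ℤ × ℤ) : Prop := x ≠ y ∧ |x.1 - y.1| ≤ 1 ∧ |x.2 - y.2| ≤ 1

/-- the 6-adjacency on `ℤ³` -/
def adj6 (x y : ℤ × ℤ × ℤ) : Prop :=
  |x.1 - y.1| + |x.2.1 - y.2.1| + |x.2.2 - y.2.2| = 1

/-- the digital neighborhood of `m` taken within `M`: the points of `M` that are
`r`-adjacent to `m` -/
def Nbhd {X : Type*} (r : X → X → Prop) (M : Set X) (m : X) : Set X :=
  {p ∈ M | r m p}

/-- a digital isomorphism between the digital images `(A, rX)` and `(B, rY)`: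
a bijection preserving and reflecting adjacency -/
def DigIso {X Y : Type*} (rX : X → X → Prop) (A : Set X)
    (rY : Y → Y → Prop) (B : Set Y) : Prop :=
  ∃ α : A ≃ B, ∀ x y : A, rX x.1 y.1 ↔ rY (α x).1 (α y).1

/-- `D₊ⁿ`, the points of `ℤⁿ` with all coordinates nonnegative -/
def Dplus (n : ℕ) : Set (Fin n → ℤ) := {x | ∀ k, 0 ≤ x k}

/-- `m` has a chart into `(ℤⁿ, κ₁)`: its digital neighborhood within `M` is digitally
isomorphic to the digital neighborhood of some point `s` taken in `(ℤⁿ, κ₁)` -/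
def ChartZ {X : Type*} (r : X → X → Prop) (M : Set X) (m : X) (n : ℕ) : Prop :=
  ∃ s : Fin n → ℤ, DigIso r (Nbhd r M m) (adjK 1 n) (Nbhd (adjK 1 n) Set.univ s)

/-- `m` has a chart into `(D₊ⁿ, κ₁)` -/
def ChartD {X : Type*} (r : X → X → Prop) (M : Set X) (m : X) (n : ℕ) : Prop :=
  ∃ s ∈ Dplus n, DigIso r (Nbhd r M m) (adjK 1 n) (Nbhd (adjK 1 n) (Dplus n) s)

/-- `(M, r)` is a digital `n`-manifold (without boundary): `n` is the least
nonnegative integer such that every point has a chart into `(ℤⁿ, κ₁)` -/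
def IsDigManifold {X : Type*} (r : X → X → Prop) (M : Set X) (n : ℕ) : Prop :=
  (∀ m ∈ M, ChartZ r M m n) ∧ ∀ k < n, ¬ ∀ m ∈ M, ChartZ r M m k

/-- `(M, r)` is a digital `n`-manifold with boundary: `n` is the least nonnegative
integer such that every point has a chart into `(ℤⁿ, κ₁)` or into `(D₊ⁿ, κ₁)` -/
def IsDigManifoldBd {X : Type*} (r : X → X → Prop) (M : Set X) (n : ℕ) : Prop :=
  (∀ m ∈ M, ChartZ r M m n ∨ ChartD r M m n) ∧
    ∀ k < n, ¬ ∀ m ∈ M, ChartZ r M m k ∨ ChartD r M m k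

/-- the interior of a digital `n`-manifold with boundary: the points admitting a
chart into `(ℤⁿ, κ₁)` -/
def dInterior {X : Type*} (r : X → X → Prop) (M : Set X) (n : ℕ) : Set X :=
  {m ∈ M | ChartZ r M m n}

/-- the boundary of a digital `n`-manifold with boundary: the points of `M` not
admitting a chart into `(ℤⁿ, κ₁)` -/
def dBoundary {X : Type*} (r : X → X → Prop) (M : Set X) (n : ℕ) : Set X :=
  {m ∈ M | ¬ ChartZ r M m n}

/-- `S` is digitally connected w.r.t. adjacency `r`: any two points are joined by a
chain of points of `S` in which consecutive points are adjacent -/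
def ConnOn {X : Type*} (r : X → X → Prop) (S : Set X) : Prop :=
  ∀ x ∈ S, ∀ y ∈ S,
    Relation.ReflTransGen (fun p q => p ∈ S ∧ q ∈ S ∧ r p q) x y

/-- the digital support of an integer-valued function -/
def sp {A : Type*} (f : A → ℤ) : Set A := {p | f p ≠ 0}

open Classical in
/-- the digital Euler characteristic of a finite digital image: the alternating sum
`Σ (-1)^r α_r` where `α_r` is the number of `r`-dimensional simplices, i.e.
`(r+1)`-element subsets of `M` whose points are pairwise adjacent -/
noncomputable def eulerChar {X : Type*} (r : X → X → Prop) (M : Finset X) : ℤ :=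
  ∑ k ∈ Finset.range M.card, (-1 : ℤ) ^ k *
    (((M.powersetCard (k + 1)).filter fun S => ∀ x ∈ S, ∀ y ∈ S, x ≠ y → r x y).card : ℤ)

/-- the digital 2-sphere `S² = [-1,1]³_ℤ \ {(0,0,0)}` -/
def digS2 : Set (ℤ × ℤ × ℤ) :=
  {p | (|p.1| ≤ 1 ∧ |p.2.1| ≤ 1 ∧ |p.2.2| ≤ 1) ∧ p ≠ (0, 0, 0)}

/-- `D₊²` as a subset of `ℤ × ℤ` -/
def Dplus2 : Set (ℤ × ℤ) := {p | 0 ≤ p.1 ∧ 0 ≤ p.2}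

/-- a corner point of the digital 2-sphere: all three coordinates lie in `{-1, 1}` -/
def CornerPt (p : ℤ × ℤ × ℤ) : Prop :=
  (p.1 = -1 ∨ p.1 = 1) ∧ (p.2.1 = -1 ∨ p.2.1 = 1) ∧ (p.2.2 = -1 ∨ p.2.2 = 1)

section Helpers

lemma fin2_cases (k : Fin 2) : k = 0 ∨ k = 1 := by fin_cases k <;> simp

/-- abs-free characterization of 6-adjacency -/
lemma adj6_iff (x y : ℤ × ℤ × ℤ) : adj6 x y ↔
    ((x.1 - y.1 = 1 ∨ y.1 - x.1 = 1) ∧ x.2.1 = y.2.1 ∧ x.2.2 = y.2.2) ∨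
    (x.1 = y.1 ∧ (x.2.1 - y.2.1 = 1 ∨ y.2.1 - x.2.1 = 1) ∧ x.2.2 = y.2.2) ∨
    (x.1 = y.1 ∧ x.2.1 = y.2.1 ∧ (x.2.2 - y.2.2 = 1 ∨ y.2.2 - x.2.2 = 1)) := by
  unfold adj6
  rcases abs_cases (x.1 - y.1) with ⟨h1, _⟩ | ⟨h1, _⟩ <;>
  rcases abs_cases (x.2.1 - y.2.1) with ⟨h2, _⟩ | ⟨h2, _⟩ <;>
  rcases abs_cases (x.2.2 - y.2.2) with ⟨h3, _⟩ | ⟨h3, _⟩ <;>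
  rw [h1, h2, h3] <;> omega

lemma adj4_iff (x y : ℤ × ℤ) : adj4 x y ↔
    ((x.1 - y.1 = 1 ∨ y.1 - x.1 = 1) ∧ x.2 = y.2) ∨
    (x.1 = y.1 ∧ (x.2 - y.2 = 1 ∨ y.2 - x.2 = 1)) := by
  unfold adj4
  rcases abs_cases (x.1 - y.1) with ⟨h1, _⟩ | ⟨h1, _⟩ <;>
  rcases abs_cases (x.2 - y.2) with ⟨h2, _⟩ | ⟨h2, _⟩ <;>
  rw [h1, h2] <;> omega

lemma adjK2_iff (x y : Fin 2 → ℤ) : adjK 1 2 x y ↔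
    ((x 0 - y 0 = 1 ∨ y 0 - x 0 = 1) ∧ x 1 = y 1) ∨
    (x 0 = y 0 ∧ (x 1 - y 1 = 1 ∨ y 1 - x 1 = 1)) := by
  unfold adjK
  constructor
  · rintro ⟨hne, hb, hc⟩
    have h0 := hb 0
    have h1 := hb 1
    have hne' : x 0 ≠ y 0 ∨ x 1 ≠ y 1 := by
      by_contra h
      push_neg at h
      exact hne (funext fun k => by fin_cases k <;> simp [h.1, h.2])
    have hcard : ¬ (x 0 ≠ y 0 ∧ x 1 ≠ y 1) := by
      rintro ⟨ha, hb'⟩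
      have heq : Finset.univ.filter (fun k => x k ≠ y k) = Finset.univ :=
        Finset.filter_true_of_mem (fun k _ => by fin_cases k <;> assumption)
      rw [heq] at hc
      simp at hc
    rw [abs_le] at h0 h1
    omega
  · rintro h
    refine ⟨?_, ?_, ?_⟩
    · intro heq
      subst heq
      omega
    · intro k
      rcases fin2_cases k with rfl | rfl <;> rw [abs_le] <;> omega
    · rw [Finset.card_le_one]
      intro a ha b hb
      simp only [Finset.mem_filter] at ha hb
      fin_cases a <;> fin_cases b <;> simp_all <;> omega

end Helpers
/-- Two 6-neighbors of a common point are never 6-adjacent (parity). -/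
lemma adj6_parity {m x y : ℤ × ℤ × ℤ} (h1 : adj6 m x) (h2 : adj6 m y) : ¬ adj6 x y := by
  rw [adj6_iff] at h1 h2 ⊢
  omega

lemma adj4_parity {m x y : ℤ × ℤ} (h1 : adj4 m x) (h2 : adj4 m y) : ¬ adj4 x y := by
  rw [adj4_iff] at h1 h2 ⊢
  omega

lemma adjK2_parity {m x y : Fin 2 → ℤ} (h1 : adjK 1 2 m x) (h2 : adjK 1 2 m y) :
    ¬ adjK 1 2 x y := by
  rw [adjK2_iff] at h1 h2 ⊢
  omega

lemma funext2_iff (p : Fin 2 → ℤ) (a b : ℤ) : p = ![a, b] ↔ p 0 = a ∧ p 1 = b := by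
  rw [funext_iff, Fin.forall_fin_two]
  simp

/-- Any bijection between two discrete digital images is a digital isomorphism. -/
lemma digIso_of_discrete {X Y : Type*} {rX : X → X → Prop} {rY : Y → Y → Prop}
    {A : Set X} {B : Set Y} (sA : Finset X) (sB : Finset Y)
    (hA : A = ↑sA) (hB : B = ↑sB) (hcard : sA.card = sB.card)
    (dA : ∀ x ∈ A, ∀ y ∈ A, ¬ rX x y) (dB : ∀ x ∈ B, ∀ y ∈ B, ¬ rY x y) :
    DigIso rX A rY B := by
  subst hA; subst hB
  have e0 : {x // x ∈ sA} ≃ {y // y ∈ sB} :=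
    Fintype.equivOfCardEq (by rw [Fintype.card_coe, Fintype.card_coe, hcard])
  have e : ((↑sA : Set X)) ≃ ((↑sB : Set Y)) :=
    ((Equiv.subtypeEquivRight fun x => Finset.mem_coe).trans e0).trans
      (Equiv.subtypeEquivRight fun y => Finset.mem_coe.symm)
  exact ⟨e, fun x y => iff_of_false (dA _ x.2 _ y.2) (dB _ (e x).2 _ (e y).2)⟩

lemma no_digIso_of_card_ne {X Y : Type*} {rX : X → X → Prop} {rY : Y → Y → Prop}
    {A : Set X} {B : Set Y} (sA : Finset X) (sB : Finset Y)
    (hA : A = ↑sA) (hB : B = ↑sB) (hcard : sA.card ≠ sB.card) :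
    ¬ DigIso rX A rY B := by
  rintro ⟨e, -⟩
  subst hA; subst hB
  have e0 : {x // x ∈ sA} ≃ {y // y ∈ sB} :=
    ((Equiv.subtypeEquivRight fun x => Finset.mem_coe.symm).trans e).trans
      (Equiv.subtypeEquivRight fun y => Finset.mem_coe)
  exact hcard (by rw [← Fintype.card_coe sA, ← Fintype.card_coe sB]; exact Fintype.card_congr e0)

lemma card3' {α : Type*} [DecidableEq α] {p q r : α} (h1 : p ≠ q) (h2 : p ≠ r) (h3 : q ≠ r) :
    ({p, q, r} : Finset α).card = 3 := by
  rw [Finset.card_insert_of_notMem (by simp [h1, h2]),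
      Finset.card_insert_of_notMem (by simp [h3]), Finset.card_singleton]

lemma card4' {α : Type*} [DecidableEq α] {p q r s : α} (h1 : p ≠ q) (h2 : p ≠ r) (h3 : p ≠ s)
    (h4 : q ≠ r) (h5 : q ≠ s) (h6 : r ≠ s) : ({p, q, r, s} : Finset α).card = 4 := by
  rw [Finset.card_insert_of_notMem (by simp [h1, h2, h3]),
      Finset.card_insert_of_notMem (by simp [h4, h5]),
      Finset.card_insert_of_notMem (by simp [h6]), Finset.card_singleton]

/-- the neighborhood of any point of `(ℤ², κ₁)` -/
lemma nbhdKZ (s : Fin 2 → ℤ) : Nbhd (adjK 1 2) Set.univ s =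
    ↑({![s 0 + 1, s 1], ![s 0 - 1, s 1], ![s 0, s 1 + 1], ![s 0, s 1 - 1]} :
      Finset (Fin 2 → ℤ)) := by
  ext p
  simp [Nbhd, adjK2_iff, funext2_iff]
  omega

lemma nbhdKZ_card (s : Fin 2 → ℤ) :
    ({![s 0 + 1, s 1], ![s 0 - 1, s 1], ![s 0, s 1 + 1], ![s 0, s 1 - 1]} :
      Finset (Fin 2 → ℤ)).card = 4 := by
  apply card4' <;> simp only [ne_eq, funext2_iff] <;> simp <;> omega

/-- the neighborhood of `(1,0)` in `(D₊², κ₁)` -/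
lemma nbhdKD : Nbhd (adjK 1 2) (Dplus 2) ![1, 0] =
    ↑({![0, 0], ![2, 0], ![1, 1]} : Finset (Fin 2 → ℤ)) := by
  ext p
  simp [Nbhd, Dplus, adjK2_iff, funext2_iff, Fin.forall_fin_two]
  omega

lemma nbhd4Z : Nbhd adj4 Set.univ ((0 : ℤ), (0 : ℤ)) =
    ↑({(1, 0), (-1, 0), (0, 1), (0, -1)} : Finset (ℤ × ℤ)) := by
  ext ⟨x, y⟩
  simp [Nbhd, adj4_iff, Prod.ext_iff]
  omega

lemma nbhd4D : Nbhd adj4 Dplus2 (1, 0) =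
    ↑({(0, 0), (2, 0), (1, 1)} : Finset (ℤ × ℤ)) := by
  ext ⟨x, y⟩
  simp [Nbhd, Dplus2, adj4_iff, Prod.ext_iff]
  omega
lemma corner_nbhd {a b c : ℤ} (ha : a = -1 ∨ a = 1) (hb : b = -1 ∨ b = 1)
    (hc : c = -1 ∨ c = 1) :
    Nbhd adj6 digS2 (a, b, c) =
      ↑({(0, b, c), (a, 0, c), (a, b, 0)} : Finset (ℤ × ℤ × ℤ)) := by
  ext ⟨x, y, z⟩
  simp [Nbhd, digS2, adj6_iff, abs_le, Prod.ext_iff]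
  omega

lemma corner_nbhd_card {a b c : ℤ} (ha : a = -1 ∨ a = 1) (hb : b = -1 ∨ b = 1)
    (hc : c = -1 ∨ c = 1) :
    ({(0, b, c), (a, 0, c), (a, b, 0)} : Finset (ℤ × ℤ × ℤ)).card = 3 := by
  apply card3' <;> simp [Prod.ext_iff] <;> omega

lemma corner_mem {p : ℤ × ℤ × ℤ} (h : CornerPt p) : p ∈ digS2 := by
  obtain ⟨ha, hb, hc⟩ := h
  refine ⟨⟨?_, ?_, ?_⟩, ?_⟩
  · rw [abs_le]; omega
  · rw [abs_le]; omega
  · rw [abs_le]; omega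
  · intro hp
    apply absurd ha
    rw [hp]
    decide

set_option maxHeartbeats 1000000 in
lemma noncorner_nbhd {m : ℤ × ℤ × ℤ} (hm : m ∈ digS2) (hnc : ¬ CornerPt m) :
    ∃ F : Finset (ℤ × ℤ × ℤ), Nbhd adj6 digS2 m = ↑F ∧ F.card = 4 := by
  obtain ⟨a, b, c⟩ := m
  obtain ⟨⟨h1, h2, h3⟩, h0⟩ := hm
  dsimp only at h1 h2 h3
  rw [abs_le] at h1 h2 h3
  have h0' : ¬ (a = 0 ∧ b = 0 ∧ c = 0) := by simpa [Prod.ext_iff] using h0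
  clear h0
  simp only [CornerPt, not_and_or] at hnc
  have hz : a = 0 ∨ b = 0 ∨ c = 0 := by omega
  by_cases hA : a = 0
  · by_cases hB : b = 0
    · -- a = b = 0, c = ±1
      refine ⟨{(1, 0, c), (-1, 0, c), (0, 1, c), (0, -1, c)}, ?_, ?_⟩
      · ext ⟨x, y, z⟩
        simp [Nbhd, digS2, adj6_iff, abs_le, Prod.ext_iff]
        omega
      · apply card4' <;> simp [Prod.ext_iff] <;> omega
    · by_cases hC : c = 0
      · -- a = c = 0, b = ±1
        refine ⟨{(1, b, 0), (-1, b, 0), (0, b, 1), (0, b, -1)}, ?_, ?_⟩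
        · ext ⟨x, y, z⟩
          simp [Nbhd, digS2, adj6_iff, abs_le, Prod.ext_iff]
          omega
        · apply card4' <;> simp [Prod.ext_iff] <;> omega
      · -- a = 0, b, c = ±1
        refine ⟨{(1, b, c), (-1, b, c), (0, 0, c), (0, b, 0)}, ?_, ?_⟩
        · ext ⟨x, y, z⟩
          simp [Nbhd, digS2, adj6_iff, abs_le, Prod.ext_iff]
          omega
        · apply card4' <;> simp [Prod.ext_iff] <;> omega
  · by_cases hB : b = 0
    · by_cases hC : c = 0
      · -- b = c = 0, a = ±1
        refine ⟨{(a, 1, 0), (a, -1, 0), (a, 0, 1), (a, 0, -1)}, ?_, ?_⟩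
        · ext ⟨x, y, z⟩
          simp [Nbhd, digS2, adj6_iff, abs_le, Prod.ext_iff]
          omega
        · apply card4' <;> simp [Prod.ext_iff] <;> omega
      · -- b = 0, a, c = ±1
        refine ⟨{(a, 1, c), (a, -1, c), (0, 0, c), (a, 0, 0)}, ?_, ?_⟩
        · ext ⟨x, y, z⟩
          simp [Nbhd, digS2, adj6_iff, abs_le, Prod.ext_iff]
          omega
        · apply card4' <;> simp [Prod.ext_iff] <;> omega
    · -- c = 0, a, b = ±1
      have hC : c = 0 := by omega
      refine ⟨{(a, b, 1), (a, b, -1), (0, b, 0), (a, 0, 0)}, ?_, ?_⟩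
      · ext ⟨x, y, z⟩
        simp [Nbhd, digS2, adj6_iff, abs_le, Prod.ext_iff]
        omega
      · apply card4' <;> simp [Prod.ext_iff] <;> omega
lemma mem111 : ((1 : ℤ), (1 : ℤ), (1 : ℤ)) ∈ digS2 := corner_mem ⟨Or.inr rfl, Or.inr rfl, Or.inr rfl⟩

lemma nbhd111 : Nbhd adj6 digS2 ((1 : ℤ), (1 : ℤ), (1 : ℤ)) =
    ↑({((0 : ℤ), (1 : ℤ), (1 : ℤ)), (1, 0, 1), (1, 1, 0)} : Finset (ℤ × ℤ × ℤ)) :=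
  corner_nbhd (Or.inr rfl) (Or.inr rfl) (Or.inr rfl)

lemma adjK0_not (s p : Fin 0 → ℤ) : ¬ adjK 1 0 s p :=
  fun h => h.1 (funext fun k => k.elim0)

lemma adjK1_cases {s p : Fin 1 → ℤ} (h : adjK 1 1 s p) :
    p = (fun _ => s 0 + 1) ∨ p = (fun _ => s 0 - 1) := by
  obtain ⟨hne, hb, -⟩ := h
  have h0 := hb 0
  rw [abs_le] at h0
  have hne0 : s 0 ≠ p 0 := by
    intro h'
    exact hne (funext fun k => by fin_cases k; exact h')
  have : p 0 = s 0 + 1 ∨ p 0 = s 0 - 1 := by omega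
  rcases this with h | h
  · left; funext k; fin_cases k; exact h
  · right; funext k; fin_cases k; exact h

/-- no digital isomorphism from a set with three distinct points onto a subset of a pair -/
lemma no_iso_three_to_pair {X Y : Type*} {rX : X → X → Prop} {rY : Y → Y → Prop}
    {A : Set X} {B : Set Y} (u v : Y) (hB : ∀ p ∈ B, p = u ∨ p = v)
    (a1 a2 a3 : X) (h1 : a1 ∈ A) (h2 : a2 ∈ A) (h3 : a3 ∈ A)
    (d12 : a1 ≠ a2) (d13 : a1 ≠ a3) (d23 : a2 ≠ a3) : ¬ DigIso rX A rY B := by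
  rintro ⟨e, -⟩
  have key : ∀ x y : A, (e x).1 = (e y).1 → x = y :=
    fun x y h => e.injective (Subtype.ext h)
  rcases hB _ (e ⟨a1, h1⟩).2 with h | h <;>
  rcases hB _ (e ⟨a2, h2⟩).2 with h' | h' <;>
  rcases hB _ (e ⟨a3, h3⟩).2 with h'' | h'' <;>
  first
    | exact d12 (congrArg Subtype.val (key _ _ (h.trans h'.symm)))
    | exact d13 (congrArg Subtype.val (key _ _ (h.trans h''.symm)))
    | exact d23 (congrArg Subtype.val (key _ _ (h'.trans h''.symm)))

lemma mem_nbhd111_1 : ((0 : ℤ), (1 : ℤ), (1 : ℤ)) ∈ Nbhd adj6 digS2 ((1 : ℤ), (1 : ℤ), (1 : ℤ)) := by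
  rw [nbhd111]; simp

lemma mem_nbhd111_2 : ((1 : ℤ), (0 : ℤ), (1 : ℤ)) ∈ Nbhd adj6 digS2 ((1 : ℤ), (1 : ℤ), (1 : ℤ)) := by
  rw [nbhd111]; simp

lemma mem_nbhd111_3 : ((1 : ℤ), (1 : ℤ), (0 : ℤ)) ∈ Nbhd adj6 digS2 ((1 : ℤ), (1 : ℤ), (1 : ℤ)) := by
  rw [nbhd111]; simp

lemma no_chart0 : ¬ (ChartZ adj6 digS2 ((1 : ℤ), (1 : ℤ), (1 : ℤ)) 0 ∨
    ChartD adj6 digS2 ((1 : ℤ), (1 : ℤ), (1 : ℤ)) 0) := by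
  rintro (⟨s, e, -⟩ | ⟨s, -, e, -⟩) <;>
    exact absurd (e ⟨_, mem_nbhd111_1⟩).2 (fun h => adjK0_not _ _ h.2)

lemma no_chart1 : ¬ (ChartZ adj6 digS2 ((1 : ℤ), (1 : ℤ), (1 : ℤ)) 1 ∨
    ChartD adj6 digS2 ((1 : ℤ), (1 : ℤ), (1 : ℤ)) 1) := by
  rintro (⟨s, hiso⟩ | ⟨s, -, hiso⟩) <;>
  exact no_iso_three_to_pair (fun _ => s 0 + 1) (fun _ => s 0 - 1)
    (fun p hp => adjK1_cases hp.2) _ _ _ mem_nbhd111_1 mem_nbhd111_2 mem_nbhd111_3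
    (by simp [Prod.ext_iff]) (by simp [Prod.ext_iff]) (by simp [Prod.ext_iff]) hiso
lemma nbhdKZ0 : Nbhd (adjK 1 2) Set.univ (fun _ => (0 : ℤ)) =
    ↑({![1, 0], ![-1, 0], ![0, 1], ![0, -1]} : Finset (Fin 2 → ℤ)) := by
  ext p
  simp [Nbhd, adjK2_iff, funext2_iff]
  omega

lemma nbhdKZ0_card :
    ({![1, 0], ![-1, 0], ![0, 1], ![0, -1]} : Finset (Fin 2 → ℤ)).card = 4 := by
  apply card4' <;> simp only [ne_eq, funext2_iff] <;> simp

lemma corner_no_chartZ {m : ℤ × ℤ × ℤ} (hcp : CornerPt m) : ¬ ChartZ adj6 digS2 m 2 := by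
  obtain ⟨a, b, c⟩ := m
  obtain ⟨ha, hb, hc⟩ := hcp
  rintro ⟨s, hiso⟩
  exact no_digIso_of_card_ne _ _ (corner_nbhd ha hb hc) (nbhdKZ s)
    (by rw [corner_nbhd_card ha hb hc, nbhdKZ_card]; omega) hiso

lemma corner_chartD {m : ℤ × ℤ × ℤ} (hcp : CornerPt m) : ChartD adj6 digS2 m 2 := by
  obtain ⟨a, b, c⟩ := m
  obtain ⟨ha, hb, hc⟩ := hcp
  refine ⟨![1, 0], by intro k; fin_cases k <;> decide, ?_⟩
  exact digIso_of_discrete _ _ (corner_nbhd ha hb hc) nbhdKD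
    (by rw [corner_nbhd_card ha hb hc]; decide)
    (fun x hx y hy => adj6_parity hx.2 hy.2)
    (fun x hx y hy => adjK2_parity hx.2 hy.2)

lemma noncorner_chartZ {m : ℤ × ℤ × ℤ} (hm : m ∈ digS2) (hnc : ¬ CornerPt m) :
    ChartZ adj6 digS2 m 2 := by
  obtain ⟨F, hF, hFcard⟩ := noncorner_nbhd hm hnc
  refine ⟨fun _ => 0, ?_⟩
  exact digIso_of_discrete _ _ hF nbhdKZ0 (hFcard.trans nbhdKZ0_card.symm)
    (fun x hx y hy => adj6_parity hx.2 hy.2)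
    (fun x hx y hy => adjK2_parity hx.2 hy.2)

lemma corner_iso4 {m : ℤ × ℤ × ℤ} (hcp : CornerPt m) :
    DigIso adj6 (Nbhd adj6 digS2 m) adj4 (Nbhd adj4 Dplus2 (1, 0)) := by
  obtain ⟨a, b, c⟩ := m
  obtain ⟨ha, hb, hc⟩ := hcp
  exact digIso_of_discrete _ _ (corner_nbhd ha hb hc) nbhd4D
    (by rw [corner_nbhd_card ha hb hc]; decide)
    (fun x hx y hy => adj6_parity hx.2 hy.2)
    (fun x hx y hy => adj4_parity hx.2 hy.2)

lemma noncorner_iso4 {m : ℤ × ℤ × ℤ} (hm : m ∈ digS2) (hnc : ¬ CornerPt m) :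
    ∃ s : ℤ × ℤ, DigIso adj6 (Nbhd adj6 digS2 m) adj4 (Nbhd adj4 Set.univ s) := by
  obtain ⟨F, hF, hFcard⟩ := noncorner_nbhd hm hnc
  refine ⟨(0, 0), ?_⟩
  exact digIso_of_discrete _ _ hF nbhd4Z (by rw [hFcard]; decide)
    (fun x hx y hy => adj6_parity hx.2 hy.2)
    (fun x hx y hy => adj4_parity hx.2 hy.2)

/-- `S²` with the 6-adjacency is a digital 2-manifold with boundary,
with boundary the eight corner points and interior the rest; corner points are
charted in `D₊²` at `(1,0)`, non-corner points in `ℤ²`; and `S²` is not a digital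
0- or 1-manifold with boundary. -/
theorem stmt_1 :
    IsDigManifoldBd adj6 digS2 2 ∧
    dBoundary adj6 digS2 2 = {p : ℤ × ℤ × ℤ | CornerPt p} ∧
    dInterior adj6 digS2 2 = digS2 \ {p : ℤ × ℤ × ℤ | CornerPt p} ∧
    (∀ m ∈ digS2, CornerPt m →
      DigIso adj6 (Nbhd adj6 digS2 m) adj4 (Nbhd adj4 Dplus2 (1, 0))) ∧
    (∀ m ∈ digS2, ¬ CornerPt m →
      ∃ s : ℤ × ℤ, DigIso adj6 (Nbhd adj6 digS2 m) adj4 (Nbhd adj4 Set.univ s)) ∧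
    ¬ IsDigManifoldBd adj6 digS2 0 ∧ ¬ IsDigManifoldBd adj6 digS2 1 := by
  refine ⟨⟨?_, ?_⟩, ?_, ?_, ?_, ?_, ?_, ?_⟩
  · -- every point has a chart
    intro m hm
    by_cases hc : CornerPt m
    · exact Or.inr (corner_chartD hc)
    · exact Or.inl (noncorner_chartZ hm hc)
  · -- minimality
    intro k hk
    interval_cases k
    · intro hall; exact no_chart0 (hall _ mem111)
    · intro hall; exact no_chart1 (hall _ mem111)
  · -- boundary
    ext m
    simp only [dBoundary, Set.mem_setOf_eq]
    constructor
    · rintro ⟨hm, hnz⟩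
      by_contra hc
      exact hnz (noncorner_chartZ hm hc)
    · intro hc
      exact ⟨corner_mem hc, corner_no_chartZ hc⟩
  · -- interior
    ext m
    simp only [dInterior, Set.mem_setOf_eq, Set.mem_diff]
    constructor
    · rintro ⟨hm, hz⟩
      exact ⟨hm, fun hc => corner_no_chartZ hc hz⟩
    · rintro ⟨hm, hnc⟩
      exact ⟨hm, noncorner_chartZ hm hnc⟩
  · exact fun m _ hc => corner_iso4 hc
  · exact fun m hm hnc => noncorner_iso4 hm hnc
  · rintro ⟨h, -⟩
    exact no_chart0 (h _ mem111)
  · rintro ⟨h, -⟩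
    exact no_chart1 (h _ mem111)
end

section
/- The digital 2-sphere S² = [−1,1]³_ℤ \ {(0,0,0)} with the 6-adjacency is not a digital 2-manifold (with or without boundary) when ℤ² and D₊² carry the 8-adjacency: for every point m ∈ S², the induced digital neighborhood N₆(m) within S² is not digitally isomorphic to the digital neighborhood N₈(s) of any point s taken within (ℤ², 8-adjacency), nor to the digital neighborhood of any point s taken within (D₊², 8-adjacency). -/
lemma adj6_odd {x y : ℤ × ℤ × ℤ} (h : adj6 x y) :
    ¬ (2 ∣ (x.1 + x.2.1 + x.2.2) - (y.1 + y.2.1 + y.2.2)) := by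
  unfold adj6 at h
  rcases abs_cases (x.1 - y.1) with ⟨h1, _⟩ | ⟨h1, _⟩ <;>
  rcases abs_cases (x.2.1 - y.2.1) with ⟨h2, _⟩ | ⟨h2, _⟩ <;>
  rcases abs_cases (x.2.2 - y.2.2) with ⟨h3, _⟩ | ⟨h3, _⟩ <;> omega

lemma key_stmt3 {m : ℤ × ℤ × ℤ} {M : Set (ℤ × ℤ)} {s : ℤ × ℤ}
    (h1 : ((s.1 + 1, s.2) : ℤ × ℤ) ∈ M) (h2 : ((s.1 + 1, s.2 + 1) : ℤ × ℤ) ∈ M) :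
    ¬ DigIso adj6 (Nbhd adj6 digS2 m) adj8 (Nbhd adj8 M s) := by
  rintro ⟨α, hα⟩
  have hb1 : ((s.1 + 1, s.2) : ℤ × ℤ) ∈ Nbhd adj8 M s := by
    refine ⟨h1, fun h => ?_, ?_, ?_⟩
    · have := congrArg Prod.fst h; simp at this
    · simp only []
      rw [show s.1 - (s.1 + 1) = -1 by ring]; norm_num
    · simp
  have hb2 : ((s.1 + 1, s.2 + 1) : ℤ × ℤ) ∈ Nbhd adj8 M s := by
    refine ⟨h2, fun h => ?_, ?_, ?_⟩
    · have := congrArg Prod.fst h; simp at this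
    · simp only []
      rw [show s.1 - (s.1 + 1) = -1 by ring]; norm_num
    · simp only []
      rw [show s.2 - (s.2 + 1) = -1 by ring]; norm_num
  have hbadj : adj8 ((s.1 + 1, s.2) : ℤ × ℤ) ((s.1 + 1, s.2 + 1) : ℤ × ℤ) := by
    refine ⟨fun h => ?_, ?_, ?_⟩
    · have := congrArg Prod.snd h; simp at this
    · simp
    · simp only []
      rw [show s.2 - (s.2 + 1) = -1 by ring]; norm_num
  set a1 := α.symm ⟨_, hb1⟩ with ha1
  set a2 := α.symm ⟨_, hb2⟩ with ha2
  have hadj : adj6 a1.1 a2.1 := by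
    rw [hα a1 a2, ha1, ha2, Equiv.apply_symm_apply, Equiv.apply_symm_apply]
    exact hbadj
  have hm1 : adj6 m a1.1 := a1.2.2
  have hm2 : adj6 m a2.1 := a2.2.2
  have o1 := adj6_odd hm1
  have o2 := adj6_odd hm2
  have o3 := adj6_odd hadj
  omega

/-- `S²` with the 6-adjacency is not a digital 2-manifold (with or
without boundary) when `ℤ²` and `D₊²` carry the 8-adjacency: no neighborhood
`N₆(m)` is digitally isomorphic to an 8-adjacency neighborhood in `ℤ²` or `D₊²`. -/
theorem stmt_3 :
    ∀ m ∈ digS2,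
      (∀ s : ℤ × ℤ, ¬ DigIso adj6 (Nbhd adj6 digS2 m) adj8 (Nbhd adj8 Set.univ s)) ∧
      (∀ s ∈ Dplus2, ¬ DigIso adj6 (Nbhd adj6 digS2 m) adj8 (Nbhd adj8 Dplus2 s)) := by
  intro m _
  constructor
  · intro s
    exact key_stmt3 (Set.mem_univ _) (Set.mem_univ _)
  · intro s hs
    exact key_stmt3 ⟨by have := hs.1; simp; omega, hs.2⟩
      ⟨by have := hs.1; simp; omega, by have := hs.2; simp; omega⟩
end

section
/- The digital Euler characteristic is not multiplicative for Cartesian products of digital manifolds: for M₁ = M₂ = [0,1]_ℤ = {0,1} with the 2-adjacency, one has χ(M₁, 2) = χ(M₂, 2) = 1, while the Cartesian product M₁ × M₂ = {0,1} × {0,1} ⊆ ℤ² with the 4-adjacency satisfies χ(M₁ × M₂, 4) ≠ χ(M₁, 2) · χ(M₂, 2). -/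
instance : DecidableRel adj2 := fun x y => inferInstanceAs (Decidable (|x - y| = 1))

instance : DecidableRel adj4 := fun x y =>
  inferInstanceAs (Decidable (|x.1 - y.1| + |x.2 - y.2| = 1))

lemma eulerChar_eq {X : Type*} (r : X → X → Prop) [DecidableRel r] [DecidableEq X]
    (M : Finset X) :
    eulerChar r M = ∑ k ∈ Finset.range M.card, (-1 : ℤ) ^ k *
      (((M.powersetCard (k + 1)).filter fun S => ∀ x ∈ S, ∀ y ∈ S, x ≠ y → r x y).card : ℤ) := by
  unfold eulerChar
  congr!

/-- the digital Euler characteristic is not multiplicative for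
Cartesian products: `χ({0,1}, 2) = 1`, but `χ({0,1} × {0,1}, 4) ≠ 1 · 1`. -/
theorem stmt_6 :
    eulerChar adj2 ({0, 1} : Finset ℤ) = 1 ∧
    eulerChar adj4 (({0, 1} : Finset ℤ) ×ˢ ({0, 1} : Finset ℤ)) ≠
      eulerChar adj2 ({0, 1} : Finset ℤ) * eulerChar adj2 ({0, 1} : Finset ℤ) := by
  rw [eulerChar_eq, eulerChar_eq]
  constructor
  · decide
  · decide
end

section
/- The digital Euler characteristic is not additive for disjoint unions of digital manifolds: for M₁ = {(0,0), (1,0)} and M₂ = {(0,1), (1,1)} in ℤ² with the 4-adjacency, one has χ(M₁, 4) = χ(M₂, 4) = 1, while their (disjoint) union M₁ ∪ M₂ = {0,1} × {0,1} ⊆ ℤ² with the 4-adjacency satisfies χ(M₁ ∪ M₂, 4) ≠ χ(M₁, 4) + χ(M₂, 4). -/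
def eulerCharD (r : ℤ × ℤ → ℤ × ℤ → Prop) [DecidableRel r] (M : Finset (ℤ × ℤ)) : ℤ :=
  ∑ k ∈ Finset.range M.card, (-1 : ℤ) ^ k *
    (((M.powersetCard (k + 1)).filter fun S => ∀ x ∈ S, ∀ y ∈ S, x ≠ y → r x y).card : ℤ)

instance inst_s7 : DecidableRel adj4 := fun x y => by unfold adj4; infer_instance

lemma eulerChar_eq_s7 (r : ℤ × ℤ → ℤ × ℤ → Prop) [DecidableRel r] (M : Finset (ℤ × ℤ)) :
    eulerChar r M = eulerCharD r M := by
  unfold eulerChar eulerCharD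
  congr!

/-- the digital Euler characteristic is not additive for disjoint
unions: with `M₁ = {(0,0),(1,0)}`, `M₂ = {(0,1),(1,1)}` and the 4-adjacency,
`χ(M₁) = χ(M₂) = 1` but `χ(M₁ ∪ M₂) ≠ χ(M₁) + χ(M₂)`. -/
theorem stmt_7 :
    eulerChar adj4 ({(0, 0), (1, 0)} : Finset (ℤ × ℤ)) = 1 ∧
    eulerChar adj4 ({(0, 1), (1, 1)} : Finset (ℤ × ℤ)) = 1 ∧
    eulerChar adj4 (({(0, 0), (1, 0)} : Finset (ℤ × ℤ)) ∪ {(0, 1), (1, 1)}) ≠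
      eulerChar adj4 ({(0, 0), (1, 0)} : Finset (ℤ × ℤ)) +
        eulerChar adj4 ({(0, 1), (1, 1)} : Finset (ℤ × ℤ)) := by
  refine ⟨?_, ?_, ?_⟩
  · rw [eulerChar_eq_s7]; decide
  · rw [eulerChar_eq_s7]; decide
  · rw [eulerChar_eq_s7, eulerChar_eq_s7, eulerChar_eq_s7]; decide
end

section
/- Let a < b be integers. There are exactly two strict linear orders ≺ on the digital interval [a,b]_ℤ = {r ∈ ℤ : a ≤ r ≤ b} with the property that for every r ∈ [a,b]_ℤ both rays {p ∈ [a,b]_ℤ : p ≺ r} and {p ∈ [a,b]_ℤ : r ≺ p} are digitally 2-connected (where the empty set and singletons count as digitally connected); namely, the usual order < and its reverse >. -/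
/-- a strict linear order on the digital interval `[a,b]_ℤ` all of whose rays are
digitally 2-connected -/
def GoodOrder (a b : ℤ) (r : ℤ → ℤ → Prop) : Prop :=
  (∀ p ∈ Set.Icc a b, ¬ r p p) ∧
  (∀ p ∈ Set.Icc a b, ∀ q ∈ Set.Icc a b, ∀ t ∈ Set.Icc a b, r p q → r q t → r p t) ∧
  (∀ p ∈ Set.Icc a b, ∀ q ∈ Set.Icc a b, p ≠ q → (r p q ∨ r q p)) ∧
  (∀ c ∈ Set.Icc a b,
    ConnOn adj2 {p ∈ Set.Icc a b | r p c} ∧ ConnOn adj2 {p ∈ Set.Icc a b | r c p})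

/-!
A subset of `ℤ` is 2-connected exactly when it is order-convex. So if `c ≺ c + 1`, then
`c + 1 ≺ c + 2`, since otherwise the ray below `c + 1` would contain `c` and `c + 2` but not
`c + 1`. Hence all consecutive pairs of `[a,b]_ℤ` are ordered like `a, a + 1`, and by
transitivity `≺` is `<` or `>`.
-/

open Relation

lemma adj2_comm {p q : ℤ} : adj2 p q ↔ adj2 q p := by
  simp only [adj2, abs_sub_comm]

lemma connOn_adj2_of_ordConnected {S : Set ℤ} (hS : S.OrdConnected) : ConnOn adj2 S := by
  have chain_up : ∀ x ∈ S, ∀ y ∈ S, x ≤ y →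
      ReflTransGen (fun p q => p ∈ S ∧ q ∈ S ∧ adj2 p q) x y := by
    intro x hx y hy hxy
    induction y, hxy using Int.leInduction with
    | base => exact .refl
    | succ n hxn ih =>
      have hn : n ∈ S := hS.out hx hy ⟨hxn, by omega⟩
      exact (ih hn).tail ⟨hn, hy, by simp [adj2]⟩
  intro x hx y hy
  rcases le_total x y with hxy | hyx
  · exact chain_up x hx y hy hxy
  · exact ReflTransGen.mono (fun p q ⟨hq, hp, h⟩ => ⟨hp, hq, adj2_comm.1 h⟩) x y
      (ReflTransGen.swap x y (chain_up y hy x hx hyx))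

lemma ConnOn.ordConnected_of_adj2 {S : Set ℤ} (hS : ConnOn adj2 S) : S.OrdConnected := by
  refine ⟨fun x hx y hy => ?_⟩
  have hxy := hS x hx y hy
  clear hy
  induction hxy with
  | refl => simp [hx]
  | @tail q w _ hstep ih =>
    obtain ⟨-, hw, hqw⟩ := hstep
    intro t ⟨hxt, htw⟩
    have : q - w = 1 ∨ q - w = -1 := abs_eq (zero_le_one' ℤ) |>.1 hqw
    rcases le_or_gt t q with htq | hqt
    · exact ih (Set.mem_Icc.2 ⟨hxt, htq⟩)
    · obtain rfl : t = w := by omega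
      exact hw

lemma goodOrder_lt (a b : ℤ) : GoodOrder a b (· < ·) :=
  ⟨fun p _ => lt_irrefl p, fun _ _ _ _ _ _ => lt_trans, fun _ _ _ _ => lt_or_gt_of_ne,
    fun c _ => ⟨
      connOn_adj2_of_ordConnected (inferInstanceAs (Set.Icc a b ∩ Set.Iio c).OrdConnected),
      connOn_adj2_of_ordConnected (inferInstanceAs (Set.Icc a b ∩ Set.Ioi c).OrdConnected)⟩⟩

namespace GoodOrder

variable {a b : ℤ} {r : ℤ → ℤ → Prop}

lemma swap (hr : GoodOrder a b r) : GoodOrder a b (fun p q => r q p) := by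
  obtain ⟨hirr, htrans, htot, hconn⟩ := hr
  exact ⟨hirr, fun p hp q hq t ht hqp htq => htrans t ht q hq p hp htq hqp,
    fun p hp q hq hpq => (htot p hp q hq hpq).symm, fun c hc => (hconn c hc).symm⟩

lemma rel_add_one_add_one (hr : GoodOrder a b r) {c : ℤ} (hac : a ≤ c) (hcb : c + 2 ≤ b)
    (h : r c (c + 1)) : r (c + 1) (c + 2) := by
  obtain ⟨hirr, -, htot, hconn⟩ := hr
  have hc : c ∈ Set.Icc a b := ⟨hac, by omega⟩
  have hc₁ : c + 1 ∈ Set.Icc a b := ⟨by omega, by omega⟩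
  have hc₂ : c + 2 ∈ Set.Icc a b := ⟨by omega, by omega⟩
  refine (htot _ hc₁ _ hc₂ (by omega)).resolve_right fun h' => hirr _ hc₁ ?_
  have hray := ((hconn _ hc₁).1).ordConnected_of_adj2
  exact (hray.out ⟨hc, h⟩ ⟨hc₂, h'⟩ ⟨by omega, by omega⟩).2

lemma rel_add_one (hr : GoodOrder a b r) (ha : r a (a + 1)) {c : ℤ} (hac : a ≤ c)
    (hcb : c + 1 ≤ b) : r c (c + 1) := by
  induction c, hac using Int.leInduction with
  | base => exact ha
  | succ n han ih =>
    simpa [add_assoc] using hr.rel_add_one_add_one han (by omega) (ih (by omega))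

lemma rel_of_lt (hr : GoodOrder a b r) (ha : r a (a + 1)) {p q : ℤ} (hp : p ∈ Set.Icc a b)
    (hq : q ∈ Set.Icc a b) (hpq : p < q) : r p q := by
  induction q, (show p + 1 ≤ q by omega) using Int.leInduction with
  | base => exact hr.rel_add_one ha hp.1 hq.2
  | succ n hpn ih =>
    have hn : n ∈ Set.Icc a b := ⟨by linarith [hp.1], by linarith [hq.2]⟩
    exact hr.2.1 p hp n hn (n + 1) hq (ih hn (by omega)) (hr.rel_add_one ha hn.1 hq.2)

lemma rel_iff_lt (hr : GoodOrder a b r) (ha : r a (a + 1)) :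
    ∀ p ∈ Set.Icc a b, ∀ q ∈ Set.Icc a b, r p q ↔ p < q := by
  intro p hp q hq
  refine ⟨fun hpq => ?_, hr.rel_of_lt ha hp hq⟩
  by_contra! hqp
  obtain rfl | hqp := hqp.eq_or_lt
  · exact hr.1 q hq hpq
  · exact hr.1 p hp (hr.2.1 p hp q hq p hp hpq (hr.rel_of_lt ha hq hp hqp))

end GoodOrder

theorem stmt_8_general (a b : ℤ) :
    GoodOrder a b (· < ·) ∧ GoodOrder a b (fun p q => q < p) ∧
    ∀ r : ℤ → ℤ → Prop, GoodOrder a b r →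
      (∀ p ∈ Set.Icc a b, ∀ q ∈ Set.Icc a b, (r p q ↔ p < q)) ∨
      (∀ p ∈ Set.Icc a b, ∀ q ∈ Set.Icc a b, (r p q ↔ q < p)) := by
  refine ⟨goodOrder_lt a b, (goodOrder_lt a b).swap, fun r hr => ?_⟩
  rcases lt_or_ge a b with hab | hba
  · rcases hr.2.2.1 a ⟨le_rfl, hab.le⟩ (a + 1) ⟨by omega, by omega⟩ (by omega) with h | h
    · exact .inl (hr.rel_iff_lt h)
    · exact .inr fun p hp q hq => hr.swap.rel_iff_lt h q hq p hp
  · refine .inl fun p hp q hq => ?_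
    obtain rfl : p = q := by grind
    simpa using hr.1 p hp

/-- for integers `a < b` there are exactly two strict linear orders on
`[a,b]_ℤ` with all rays digitally 2-connected, namely `<` and its reverse. -/
theorem stmt_8 (a b : ℤ) (hab : a < b) :
    GoodOrder a b (· < ·) ∧ GoodOrder a b (fun p q => q < p) ∧
    ∀ r : ℤ → ℤ → Prop, GoodOrder a b r →
      (∀ p ∈ Set.Icc a b, ∀ q ∈ Set.Icc a b, (r p q ↔ p < q)) ∨
      (∀ p ∈ Set.Icc a b, ∀ q ∈ Set.Icc a b, (r p q ↔ q < p)) :=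
  stmt_8_general a b
end
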